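/- Every Schubert polynomial 𝔖_w is a sum of monomials with nonnegative integer coefficients; that is, every coefficient of 𝔖_w is ≥ 0. -/

import Mathlib

open MvPolynomial
open scoped Classical

/-- The polynomial ring ℤ[x₁,x₂,…]: the variable with index `i : ℕ` represents `x_{i+1}`. -/
abbrev PolyRing : Type := MvPolynomial ℕ ℤ

/-- The action of the simple transposition `s_{i+1}` on ℤ[x₁,x₂,…]
(exchanging the variables `x_{i+1}` and `x_{i+2}` and fixing all others). -/
noncomputable def sAct (i : ℕ) (f : PolyRing) : PolyRing :=
  rename (Equiv.swap i (i + 1)) f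

/-- The divided difference operator `∂_{i+1}`: the unique polynomial `g` with
`(x_{i+1} - x_{i+2}) * g = f - s_{i+1} f` (it exists, and is unique since the
polynomial ring is a domain). -/
noncomputable def divDiff (i : ℕ) (f : PolyRing) : PolyRing :=
  if h : ∃ g : PolyRing, (X i - X (i + 1)) * g = f - sAct i f then h.choose else 0

/-- Composite divided difference operator `∂_{a₁} ∘ ∂_{a₂} ∘ ⋯ ∘ ∂_{a_k}` along a word
`a = [a₁, a₂, …, a_k]` (so `∂_{a_k}` is applied first). -/
noncomputable def divDiffWord (a : List ℕ) (f : PolyRing) : PolyRing :=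
  a.foldr divDiff f

/-- The length `ℓ(w)` (number of inversions) of a permutation of `{1,2,…}`
(indices shifted down by one, so positions are indexed by `ℕ`). -/
noncomputable def len (w : Equiv.Perm ℕ) : ℕ :=
  Set.ncard {p : ℕ × ℕ | p.1 < p.2 ∧ w p.2 < w p.1}

/-- `a = [a₁, …, a_k]` is a reduced word for `w`: the product of the corresponding simple
transpositions `s_{a₁} s_{a₂} ⋯ s_{a_k}` is `w` and `k = ℓ(w)`, the number of inversions. -/
def IsReducedWord (w : Equiv.Perm ℕ) (a : List ℕ) : Prop :=
  (a.map fun i => Equiv.swap i (i + 1)).prod = w ∧ a.length = len w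

/-- The longest element `w₀` of `S_n` (reversing the first `n` positions, with positions
indexed by `ℕ` starting at `0`). -/
def wZero (n : ℕ) : Equiv.Perm ℕ :=
  Function.Involutive.toPerm (fun i => if i < n then n - 1 - i else i) (by
    intro i
    dsimp only
    split_ifs <;> omega)

/-- The staircase monomial `x₁^{n-1} x₂^{n-2} ⋯ x_{n-1}`, the Schubert polynomial of `w₀`. -/
noncomputable def staircase (n : ℕ) : PolyRing :=
  ∏ i ∈ Finset.range n, X i ^ (n - 1 - i)

/-- The Schubert polynomial of `w` computed inside `S_n`:
`𝔖_w = ∂_{a₁} ∂_{a₂} ⋯ ∂_{a_k} 𝔖_{w₀}` for a reduced word `w⁻¹ w₀ = s_{a₁} s_{a₂} ⋯ s_{a_k}`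
(any choice of reduced word gives the same answer). -/
noncomputable def schubertIn (n : ℕ) (w : Equiv.Perm ℕ) : PolyRing :=
  if h : ∃ a : List ℕ, IsReducedWord (w⁻¹ * wZero n) a then divDiffWord h.choose (staircase n)
  else 0

/-- The Schubert polynomial `𝔖_w` of a finitely supported permutation `w ∈ S_∞`, computed
inside any `S_n` containing `w` (independent of all choices). -/
noncomputable def schubert (w : Equiv.Perm ℕ) : PolyRing :=
  if h : ∃ n : ℕ, ∀ i, w i ≠ i → i < n then schubertIn h.choose w else 0





abbrev M : Type := (Equiv.Perm ℕ) →₀ PolyRing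

def sw (i : ℕ) : Equiv.Perm ℕ := Equiv.swap i (i+1)

noncomputable def T (i : ℕ) : Module.End PolyRing M :=
  Finsupp.lsum ℕ fun w => if w i < w (i+1) then Finsupp.lsingle (w * sw i) else 0

lemma sw_mul_self (i : ℕ) : sw i * sw i = 1 := Equiv.swap_mul_self _ _

lemma Tapp (i : ℕ) (f : M) (u : Equiv.Perm ℕ) :
    (T i f) u = if u (i+1) < u i then f (u * sw i) else 0 := by
  induction f using Finsupp.induction_linear with
  | zero => simp
  | add f g hf hg =>
      rw [map_add, Finsupp.add_apply, hf, hg, Finsupp.add_apply]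
      split_ifs <;> simp
  | single v c =>
      rw [T, Finsupp.lsum_single]
      by_cases h : v i < v (i+1)
      · rw [if_pos h, Finsupp.lsingle_apply]
        by_cases hv : v * sw i = u
        · have hv' : v = u * sw i := by
            rw [← hv, mul_assoc, sw_mul_self, mul_one]
          rw [hv, Finsupp.single_eq_same]
          have h1 : u (i+1) = v i := by
            rw [hv']; simp [Equiv.Perm.mul_apply, sw, Equiv.swap_apply_right]
          have h2 : u i = v (i+1) := by
            rw [hv']; simp [Equiv.Perm.mul_apply, sw, Equiv.swap_apply_left]
          rw [if_pos (by omega), hv', Finsupp.single_eq_same]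
        · rw [Finsupp.single_eq_of_ne' hv]
          split_ifs with hd
          · rw [Finsupp.single_eq_of_ne']
            intro hc
            exact hv (by rw [hc, mul_assoc, sw_mul_self, mul_one])
          · rfl
      · rw [if_neg h]
        simp only [LinearMap.zero_apply, Finsupp.coe_zero, Pi.zero_apply]
        split_ifs with hd
        · rw [Finsupp.single_apply, if_neg]
          intro hc
          apply h
          have h1 : v i = u (i+1) := by
            rw [hc]; simp [Equiv.Perm.mul_apply, sw, Equiv.swap_apply_left]
          have h2 : v (i+1) = u i := by
            rw [hc]; simp [Equiv.Perm.mul_apply, sw, Equiv.swap_apply_right]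
          omega
        · rfl


lemma sw_apply (i x : ℕ) : sw i x = if x = i then i+1 else if x = i+1 then i else x := by
  rw [sw, Equiv.swap_apply_def]

lemma sw_braid (i : ℕ) : sw i * sw (i+1) * sw i = sw (i+1) * sw i * sw (i+1) := by
  have h1 := Equiv.swap_mul_swap_mul_swap (x := i+2) (y := i+1) (z := i)
    (by omega) (by omega)
  have h2 := Equiv.swap_mul_swap_mul_swap (x := i) (y := i+1) (z := i+2)
    (by omega) (by omega)
  show Equiv.swap i (i+1) * Equiv.swap (i+1) (i+2) * Equiv.swap i (i+1) =
    Equiv.swap (i+1) (i+2) * Equiv.swap i (i+1) * Equiv.swap (i+1) (i+2)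
  calc Equiv.swap i (i+1) * Equiv.swap (i+1) (i+2) * Equiv.swap i (i+1)
      = Equiv.swap (i+1) i * Equiv.swap (i+2) (i+1) * Equiv.swap (i+1) i := by
        rw [Equiv.swap_comm i, Equiv.swap_comm (i+1) (i+2)]
    _ = Equiv.swap i (i+2) := h1
    _ = Equiv.swap (i+2) i := Equiv.swap_comm _ _
    _ = Equiv.swap (i+1) (i+2) * Equiv.swap i (i+1) * Equiv.swap (i+1) (i+2) := h2.symm

lemma mulsw_self (v : Equiv.Perm ℕ) (j : ℕ) : (v * sw j) j = v (j+1) := by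
  simp [Equiv.Perm.mul_apply, sw, Equiv.swap_apply_left]

lemma mulsw_succ (v : Equiv.Perm ℕ) (j : ℕ) : (v * sw j) (j+1) = v j := by
  simp [Equiv.Perm.mul_apply, sw, Equiv.swap_apply_right]

lemma mulsw_other (v : Equiv.Perm ℕ) (j x : ℕ) (h1 : x ≠ j) (h2 : x ≠ j+1) :
    (v * sw j) x = v x := by
  simp [Equiv.Perm.mul_apply, sw, Equiv.swap_apply_of_ne_of_ne h1 h2]

lemma Tsq (i : ℕ) : T i * T i = 0 := by
  apply LinearMap.ext; intro f
  apply DFunLike.ext; intro u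
  simp only [Module.End.mul_apply, Tapp, LinearMap.zero_apply, Finsupp.coe_zero,
    Pi.zero_apply]
  rw [mulsw_succ, mulsw_self]
  split_ifs <;> first | rfl | omega

lemma Tbraid (i : ℕ) : T i * T (i+1) * T i = T (i+1) * T i * T (i+1) := by
  apply LinearMap.ext; intro f
  apply DFunLike.ext; intro u
  simp only [Module.End.mul_apply, Tapp]
  have hb : u * sw i * sw (i+1) * sw i = u * sw (i+1) * sw i * sw (i+1) := by
    simp only [mul_assoc]
    congr 1
    rw [← mul_assoc, ← mul_assoc, sw_braid]
  have h1 : (u * sw i) (i+1+1) = u (i+1+1) := mulsw_other _ _ _ (by omega) (by omega)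
  have h2 : (u * sw i) (i+1) = u i := mulsw_succ _ _
  have h3 : ((u * sw i) * sw (i+1)) (i+1) = (u * sw i) (i+1+1) := mulsw_self _ _
  have h4 : ((u * sw i) * sw (i+1)) i = (u * sw i) i :=
    mulsw_other _ _ _ (by omega) (by omega)
  have h5 : (u * sw i) i = u (i+1) := mulsw_self _ _
  have h6 : (u * sw (i+1)) (i+1) = u (i+1+1) := mulsw_self _ _
  have h7 : (u * sw (i+1)) i = u i := mulsw_other _ _ _ (by omega) (by omega)
  have h8 : ((u * sw (i+1)) * sw i) (i+1+1) = (u * sw (i+1)) (i+1+1) :=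
    mulsw_other _ _ _ (by omega) (by omega)
  have h9 : (u * sw (i+1)) (i+1+1) = u (i+1) := mulsw_succ _ _
  have h10 : ((u * sw (i+1)) * sw i) (i+1) = (u * sw (i+1)) i := mulsw_succ _ _
  rw [hb]
  simp only [h1, h2, h3, h4, h5, h6, h7, h8, h9, h10]
  split_ifs <;> first | rfl | omega

lemma sw_commute {i j : ℕ} (hij : i + 2 ≤ j) : Commute (sw i) (sw j) := by
  apply Equiv.Perm.Disjoint.commute
  intro x
  simp only [sw_apply]
  split_ifs <;> omega

lemma Tcomm (i j : ℕ) (hij : i + 2 ≤ j) : T i * T j = T j * T i := by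
  apply LinearMap.ext; intro f
  apply DFunLike.ext; intro u
  simp only [Module.End.mul_apply, Tapp]
  have c1 : (u * sw i) (j+1) = u (j+1) := mulsw_other _ _ _ (by omega) (by omega)
  have c2 : (u * sw i) j = u j := mulsw_other _ _ _ (by omega) (by omega)
  have c3 : (u * sw j) (i+1) = u (i+1) := mulsw_other _ _ _ (by omega) (by omega)
  have c4 : (u * sw j) i = u i := mulsw_other _ _ _ (by omega) (by omega)
  have hc : u * sw j * sw i = u * sw i * sw j := by
    rw [mul_assoc, mul_assoc, ← (sw_commute hij).eq]
  rw [hc]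
  simp only [c1, c2, c3, c4]
  split_ifs <;> first | rfl | omega

noncomputable def Ao (i : ℕ) (p : PolyRing) : Module.End PolyRing M := 1 + p • T i

lemma smul_End_mul (p : PolyRing) (F G : Module.End PolyRing M) :
    (p • F) * G = p • (F * G) := smul_mul_assoc p F G

lemma End_mul_smul (p : PolyRing) (F G : Module.End PolyRing M) :
    F * (p • G) = p • (F * G) := mul_smul_comm p F G

lemma Aadd (i : ℕ) (p q : PolyRing) : Ao i p * Ao i q = Ao i (p + q) := by
  simp only [Ao, mul_add, add_mul, one_mul, mul_one, smul_End_mul, End_mul_smul,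
    smul_smul, Tsq, smul_zero, add_zero, add_smul]
  abel

lemma Acomm (i j : ℕ) (hij : i + 2 ≤ j) (p q : PolyRing) :
    Ao i p * Ao j q = Ao j q * Ao i p := by
  simp only [Ao, mul_add, add_mul, one_mul, mul_one, smul_End_mul, End_mul_smul,
    smul_smul, Tcomm i j hij, mul_comm p q]
  abel

lemma AYB (i : ℕ) (a b : PolyRing) :
    Ao (i+1) a * Ao i (a+b) * Ao (i+1) b = Ao i b * Ao (i+1) (a+b) * Ao i a := by
  simp only [Ao, mul_add, add_mul, one_mul, mul_one, smul_End_mul, End_mul_smul,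
    smul_smul, Tsq, smul_zero, add_zero, add_smul, mul_add, add_mul]
  rw [Tbraid i]
  module

noncomputable def Aw (l : List (ℕ × PolyRing)) : Module.End PolyRing M :=
  (l.map fun jp => Ao jp.1 jp.2).prod

lemma Aw_nil : Aw [] = 1 := rfl

lemma Aw_cons (jp : ℕ × PolyRing) (l : List (ℕ × PolyRing)) :
    Aw (jp :: l) = Ao jp.1 jp.2 * Aw l := by
  simp [Aw]

lemma Aw_append (l₁ l₂ : List (ℕ × PolyRing)) : Aw (l₁ ++ l₂) = Aw l₁ * Aw l₂ := by
  simp [Aw]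

def rowL (n j : ℕ) (x : PolyRing) : List (ℕ × PolyRing) :=
  (List.range' j (n-1-j)).map fun a => (a, x)

noncomputable def rowP (n j : ℕ) (x : PolyRing) : Module.End PolyRing M :=
  Aw (rowL n j x)

lemma rowP_triv {n j : ℕ} (h : n - 1 ≤ j) (x : PolyRing) : rowP n j x = 1 := by
  rw [rowP, rowL, show n - 1 - j = 0 from by omega]
  rfl

lemma rowP_cons {n j : ℕ} (h : j < n - 1) (x : PolyRing) :
    rowP n j x = Ao j x * rowP n (j+1) x := by
  rw [rowP, rowL, show n - 1 - j = (n - 1 - (j+1)) + 1 from by omega, List.range'_succ,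
    List.map_cons, Aw_cons]
  rfl

lemma key_comm (A R B S : Module.End PolyRing M) (h : R * B = B * R) :
    A * R * (B * S) = A * B * (R * S) := by
  rw [mul_assoc A R, ← mul_assoc R B S, h, mul_assoc B R S, ← mul_assoc]

lemma Acomm_rowP (n i : ℕ) (p x : PolyRing) :
    ∀ d j, n - 1 - j = d → i + 2 ≤ j → Ao i p * rowP n j x = rowP n j x * Ao i p := by
  intro d
  induction d with
  | zero =>
      intro j hd _
      rw [rowP_triv (by omega), one_mul, mul_one]
  | succ d ih =>
      intro j hd hij
      rw [rowP_cons (show j < n - 1 from by omega), ← mul_assoc,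
        Acomm i j hij, mul_assoc, ih (j+1) (by omega) (by omega), ← mul_assoc]

lemma claimL (n : ℕ) :
    ∀ d i (x y : PolyRing), i + d + 2 = n →
      rowP n (i+1) x * rowP n i y = Ao i (y - x) * (rowP n (i+1) y * rowP n i x) := by
  intro d
  induction d with
  | zero =>
      intro i x y h
      rw [rowP_triv (j := i+1) (by omega) x, rowP_triv (j := i+1) (by omega) y,
        one_mul, one_mul, rowP_cons (show i < n - 1 from by omega) y,
        rowP_cons (show i < n - 1 from by omega) x,
        rowP_triv (j := i+1) (by omega) y, rowP_triv (j := i+1) (by omega) x,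
        mul_one, mul_one, Aadd, show y - x + x = y from by ring]
  | succ d ih =>
      intro i x y h
      have h1 : i + 1 < n - 1 := by omega
      have h2 : i < n - 1 := by omega
      have hxy : x + (y - x) = y := by ring
      calc rowP n (i+1) x * rowP n i y
          = Ao (i+1) x * rowP n (i+2) x * (Ao i y * rowP n (i+1) y) := by
            rw [rowP_cons h1, rowP_cons h2]
        _ = Ao (i+1) x * Ao i y * (rowP n (i+2) x * rowP n (i+1) y) := by
            rw [key_comm _ _ _ _ ((Acomm_rowP n i y x _ (i+2) rfl (by omega)).symm)]
        _ = Ao (i+1) x * Ao i y * (Ao (i+1) (y-x) * (rowP n (i+2) y * rowP n (i+1) x)) := by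
            rw [ih (i+1) x y (by omega)]
        _ = Ao (i+1) x * Ao i y * Ao (i+1) (y-x) * (rowP n (i+2) y * rowP n (i+1) x) := by
            simp only [mul_assoc]
        _ = Ao i (y-x) * Ao (i+1) y * Ao i x * (rowP n (i+2) y * rowP n (i+1) x) := by
            have := AYB i x (y - x)
            rw [hxy] at this
            rw [this]
        _ = Ao i (y-x) * (Ao (i+1) y * Ao i x * (rowP n (i+2) y * rowP n (i+1) x)) := by
            simp only [mul_assoc]
        _ = Ao i (y-x) * (Ao (i+1) y * rowP n (i+2) y * (Ao i x * rowP n (i+1) x)) := by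
            rw [key_comm _ _ _ _ ((Acomm_rowP n i x y _ (i+2) rfl (by omega)).symm)]
        _ = Ao i (y-x) * (rowP n (i+1) y * rowP n i x) := by
            rw [← rowP_cons h1, ← rowP_cons h2]
noncomputable def Gw (n : ℕ) : ℕ → List (ℕ × PolyRing)
  | 0 => []
  | k+1 => rowL n k (X k) ++ Gw n k

noncomputable def Felt (n : ℕ) : M := Aw (Gw n (n-1)) (Finsupp.single 1 1)

noncomputable def Sch (n : ℕ) (u : Equiv.Perm ℕ) : PolyRing := Felt n u

noncomputable def Sg (i : ℕ) : M → M :=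
  Finsupp.mapRange (rename (Equiv.swap i (i+1))) (map_zero _)

noncomputable def tw (i : ℕ) (jp : ℕ × PolyRing) : ℕ × PolyRing :=
  (jp.1, rename (Equiv.swap i (i+1)) jp.2)

lemma Sg_apply (i : ℕ) (v : M) (u : Equiv.Perm ℕ) :
    Sg i v u = rename (Equiv.swap i (i+1)) (v u) := Finsupp.mapRange_apply

lemma Sg_T (i j : ℕ) (v : M) : Sg i (T j v) = T j (Sg i v) := by
  apply DFunLike.ext; intro u
  rw [Sg_apply, Tapp, Tapp]
  split_ifs
  · rw [Sg_apply]
  · exact map_zero _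

lemma Sg_add (i : ℕ) (v w : M) : Sg i (v + w) = Sg i v + Sg i w := by
  apply DFunLike.ext; intro u
  simp [Sg_apply, Finsupp.add_apply]

lemma Sg_smul (i : ℕ) (p : PolyRing) (v : M) :
    Sg i (p • v) = (rename (Equiv.swap i (i+1)) p) • Sg i v := by
  apply DFunLike.ext; intro u
  simp [Sg_apply, Finsupp.smul_apply, smul_eq_mul]

lemma Ao_apply (j : ℕ) (q : PolyRing) (w : M) : Ao j q w = w + q • (T j w) := by
  simp [Ao, LinearMap.add_apply, LinearMap.smul_apply, Module.End.one_apply]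

lemma Sg_Ao (i j : ℕ) (p : PolyRing) (v : M) :
    Sg i (Ao j p v) = Ao j (rename (Equiv.swap i (i+1)) p) (Sg i v) := by
  rw [Ao_apply, Ao_apply, Sg_add, Sg_smul, Sg_T]

lemma Sg_Aw (i : ℕ) : ∀ (l : List (ℕ × PolyRing)) (v : M),
    Sg i (Aw l v) = Aw (l.map (tw i)) (Sg i v) := by
  intro l
  induction l with
  | nil => intro v; simp [Aw_nil, Module.End.one_apply]
  | cons jp l ih =>
      intro v
      rw [List.map_cons, Aw_cons, Aw_cons, Module.End.mul_apply, Module.End.mul_apply,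
        Sg_Ao, ih]
      rfl

lemma Sg_single_id (i : ℕ) : Sg i (Finsupp.single 1 1) = Finsupp.single 1 1 := by
  rw [Sg, Finsupp.mapRange_single, map_one]

lemma tw_rowL (i n j : ℕ) (x : PolyRing) :
    (rowL n j x).map (tw i) = rowL n j (rename (Equiv.swap i (i+1)) x) := by
  simp [rowL, List.map_map, tw]

lemma tw_X_of_ne (i k : ℕ) (h1 : k ≠ i) (h2 : k ≠ i+1) :
    rename (Equiv.swap i (i+1)) (X k : PolyRing) = X k := by
  rw [rename_X, Equiv.swap_apply_of_ne_of_ne h1 h2]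

lemma tw_X_self (i : ℕ) :
    rename (Equiv.swap i (i+1)) (X i : PolyRing) = X (i+1) := by
  rw [rename_X, Equiv.swap_apply_left]

lemma tw_X_succ (i : ℕ) :
    rename (Equiv.swap i (i+1)) (X (i+1) : PolyRing) = X i := by
  rw [rename_X, Equiv.swap_apply_right]

lemma Gw_twist_low (n i : ℕ) : ∀ k, k ≤ i → (Gw n k).map (tw i) = Gw n k := by
  intro k
  induction k with
  | zero => intro _; rfl
  | succ k ih =>
      intro hk
      rw [Gw, List.map_append, tw_rowL, tw_X_of_ne i k (by omega) (by omega),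
        ih (by omega)]

lemma claimM (n i : ℕ) : ∀ d l, l = i+2+d → l ≤ n - 1 →
    Aw ((Gw n l).map (tw i)) = Ao i (X (i+1) - X i) * Aw (Gw n l) := by
  intro d
  induction d with
  | zero =>
      intro l hl hln
      subst hl
      show Aw ((Gw n (i+1+1)).map (tw i)) = _
      rw [Gw, Gw, List.map_append, List.map_append, tw_rowL, tw_rowL, tw_X_self,
        tw_X_succ, Gw_twist_low n i i le_rfl, Aw_append, Aw_append, Aw_append, Aw_append]
      have hcl := claimL n (n - i - 2) i (X i) (X (i+1)) (by omega)
      rw [← mul_assoc, ← rowP, ← rowP, hcl, ← mul_assoc, ← mul_assoc, ← rowP, ← rowP]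
      simp only [mul_assoc]
  | succ d ih =>
      intro l hl hln
      subst hl
      rw [show i+2+(d+1) = (i+2+d)+1 from by omega]
      rw [Gw, List.map_append, tw_rowL, tw_X_of_ne i (i+2+d) (by omega) (by omega),
        Aw_append, Aw_append, ih (i+2+d) rfl (by omega), ← mul_assoc, ← rowP,
        ← Acomm_rowP n i (X (i+1) - X i) (X (i+2+d)) (n-1-(i+2+d)) (i+2+d) rfl
          (by omega), mul_assoc, rowP]

lemma master (n i : ℕ) (hi : i + 2 ≤ n) :
    Sg i (Felt n) = Ao i (X (i+1) - X i) (Felt n) := by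
  rw [Felt, Sg_Aw, Sg_single_id]
  by_cases hc : i + 2 ≤ n - 1
  · rw [claimM n i (n-1-(i+2)) (n-1) (by omega) le_rfl]
    rfl
  · have hn : n - 1 = i + 1 := by omega
    rw [hn, Gw, List.map_append, tw_rowL, tw_X_self, Gw_twist_low n i i le_rfl,
      Aw_append, Aw_append]
    have hcl := claimL n 0 i (X i) (X (i+1)) (by omega)
    rw [rowP_triv (j := i+1) (by omega) (X i), rowP_triv (j := i+1) (by omega) (X (i+1)),
      one_mul, one_mul] at hcl
    rw [← rowP, ← rowP, hcl, mul_assoc]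
    rfl
lemma X_sub_ne (i : ℕ) : (X i - X (i+1) : PolyRing) ≠ 0 := by
  intro h
  have : (X i : PolyRing) = X (i+1) := by
    have := sub_eq_zero.mp h
    exact this
  exact (by omega : i ≠ i+1) (MvPolynomial.X_injective this)

lemma divDiff_eq (i : ℕ) (f g : PolyRing)
    (h : (X i - X (i+1)) * g = f - sAct i f) : divDiff i f = g := by
  rw [divDiff, dif_pos ⟨g, h⟩]
  have hs := (⟨g, h⟩ : ∃ g : PolyRing, (X i - X (i+1)) * g = f - sAct i f).choose_spec
  exact mul_left_cancel₀ (X_sub_ne i) (by rw [hs, h])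

lemma divDiff_zero (i : ℕ) : divDiff i (0 : PolyRing) = 0 :=
  divDiff_eq i 0 0 (by simp [sAct])

lemma divDiff_of_fixed (i : ℕ) (f : PolyRing) (h : sAct i f = f) : divDiff i f = 0 :=
  divDiff_eq i f 0 (by rw [h]; ring)

lemma divDiff_Sch (n i : ℕ) (hi : i + 2 ≤ n) (u : Equiv.Perm ℕ) :
    divDiff i (Sch n u) = if u (i+1) < u i then Sch n (u * sw i) else 0 := by
  apply divDiff_eq
  have hm := master n i hi
  have := congrArg (fun v : M => v u) hm
  rw [Sg_apply, Ao_apply, Finsupp.add_apply, Finsupp.smul_apply, smul_eq_mul] at this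
  have hT : (T i (Felt n)) u = if u (i+1) < u i then Sch n (u * sw i) else 0 := by
    rw [Tapp]; rfl
  rw [← hT]
  show (X i - X (i+1)) * (T i (Felt n)) u = Sch n u - sAct i (Sch n u)
  have : sAct i (Sch n u) = Sch n u + (X (i+1) - X i) * (T i (Felt n)) u := this
  rw [this]
  ring
def Pos (f : PolyRing) : Prop := ∀ m, 0 ≤ coeff m f

def SVars (n : ℕ) : Set ℕ := {j : ℕ | j + 1 < n}

def Nice (n : ℕ) (v : M) : Prop :=
  ∀ u, Pos (v u) ∧ v u ∈ MvPolynomial.supported ℤ (SVars n)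

lemma Pos_zero : Pos 0 := fun m => by simp

lemma Pos_one : Pos 1 := by
  intro m
  rw [coeff_one]
  split_ifs <;> simp

lemma Pos_add {f g : PolyRing} (hf : Pos f) (hg : Pos g) : Pos (f + g) := by
  intro m
  rw [coeff_add]
  exact add_nonneg (hf m) (hg m)

lemma Pos_X_mul {f : PolyRing} (k : ℕ) (hf : Pos f) : Pos (X k * f) := by
  intro m
  rw [coeff_X_mul']
  split_ifs
  · exact hf _
  · rfl

lemma Nice_single_id (n : ℕ) : Nice n (Finsupp.single 1 1) := by
  intro u
  rw [Finsupp.single_apply]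
  split_ifs
  · exact ⟨Pos_one, one_mem _⟩
  · exact ⟨Pos_zero, zero_mem _⟩

lemma Nice_T (n j : ℕ) {v : M} (hv : Nice n v) : Nice n (T j v) := by
  intro u
  rw [Tapp]
  split_ifs
  · exact hv _
  · exact ⟨Pos_zero, zero_mem _⟩

lemma Nice_Ao (n j k : ℕ) (hk : k + 1 < n) {v : M} (hv : Nice n v) :
    Nice n (Ao j (X k) v) := by
  intro u
  rw [Ao_apply, Finsupp.add_apply, Finsupp.smul_apply, smul_eq_mul]
  constructor
  · exact Pos_add (hv u).1 (Pos_X_mul k (Nice_T n j hv u).1)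
  · exact add_mem (hv u).2 (mul_mem (MvPolynomial.X_mem_supported.2 hk) (Nice_T n j hv u).2)

lemma Nice_Aw (n : ℕ) : ∀ (l : List (ℕ × PolyRing)),
    (∀ jp ∈ l, ∃ k, k + 1 < n ∧ jp.2 = X k) → ∀ {v : M}, Nice n v → Nice n (Aw l v) := by
  intro l
  induction l with
  | nil => intro _ v hv; rw [Aw_nil]; exact hv
  | cons jp l ih =>
      intro hl v hv
      rw [Aw_cons, Module.End.mul_apply]
      obtain ⟨k, hk, hx⟩ := hl jp (by simp)
      rw [hx]
      exact Nice_Ao n jp.1 k hk (ih (fun q hq => hl q (by simp [hq])) hv)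

lemma Gw_scalars (n : ℕ) : ∀ k, k ≤ n - 1 → ∀ jp ∈ Gw n k, ∃ k', k' + 1 < n ∧ jp.2 = X k' := by
  intro k
  induction k with
  | zero => intro _ jp hjp; simp [Gw] at hjp
  | succ k ih =>
      intro hk jp hjp
      rw [Gw, List.mem_append] at hjp
      rcases hjp with h | h
      · refine ⟨k, by omega, ?_⟩
        rw [rowL, List.mem_map] at h
        obtain ⟨a, _, ha⟩ := h
        rw [← ha]
      · exact ih (by omega) jp h

lemma Nice_Felt (n : ℕ) : Nice n (Felt n) :=
  Nice_Aw n (Gw n (n-1)) (Gw_scalars n (n-1) le_rfl) (Nice_single_id n)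

lemma Pos_Sch (n : ℕ) (u : Equiv.Perm ℕ) : Pos (Sch n u) := (Nice_Felt n u).1

lemma sAct_fixed_of_supported (n i : ℕ) (hi : n ≤ i + 1) {f : PolyRing}
    (hf : f ∈ MvPolynomial.supported ℤ (SVars n)) : sAct i f = f := by
  rw [MvPolynomial.supported_eq_adjoin_X] at hf
  induction hf using Algebra.adjoin_induction with
  | mem x hx =>
      obtain ⟨k, hk, rfl⟩ := hx
      have hk' : k + 1 < n := hk
      exact tw_X_of_ne i k (by omega) (by omega)
  | algebraMap r => simp [sAct]
  | add x y _ _ hx hy => rw [sAct] at hx hy ⊢; rw [map_add, hx, hy]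
  | mul x y _ _ hx hy => rw [sAct] at hx hy ⊢; rw [map_mul, hx, hy]

lemma divDiff_Sch_high (n i : ℕ) (hi : ¬ (i + 2 ≤ n)) (u : Equiv.Perm ℕ) :
    divDiff i (Sch n u) = 0 :=
  divDiff_of_fixed i _ (sAct_fixed_of_supported n i (by omega) (Nice_Felt n u).2)

def InC (n : ℕ) (f : PolyRing) : Prop := f = 0 ∨ ∃ u, f = Sch n u

lemma InC_divDiff (n i : ℕ) {f : PolyRing} (hf : InC n f) : InC n (divDiff i f) := by
  rcases hf with rfl | ⟨u, rfl⟩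
  · left; exact divDiff_zero i
  · by_cases hi : i + 2 ≤ n
    · rw [divDiff_Sch n i hi u]
      split_ifs
      · right; exact ⟨u * sw i, rfl⟩
      · left; rfl
    · left; exact divDiff_Sch_high n i hi u

lemma InC_divDiffWord (n : ℕ) (a : List ℕ) {f : PolyRing} (hf : InC n f) :
    InC n (divDiffWord a f) := by
  induction a with
  | nil => exact hf
  | cons i a ih => exact InC_divDiff n i ih

lemma Pos_InC (n : ℕ) {f : PolyRing} (hf : InC n f) : Pos f := by
  rcases hf with rfl | ⟨u, rfl⟩
  · exact Pos_zero
  · exact Pos_Sch n u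
noncomputable def invn (n : ℕ) (w : Equiv.Perm ℕ) : ℕ :=
  ((Finset.range n ×ˢ Finset.range n).filter fun p => p.1 < p.2 ∧ w p.2 < w p.1).card

lemma invn_one (n : ℕ) : invn n 1 = 0 := by
  rw [invn, Finset.card_eq_zero, Finset.filter_eq_empty_iff]
  rintro ⟨a, b⟩ _
  simp only [Equiv.Perm.one_apply]
  omega

lemma sw_in_range {n j : ℕ} (hj : j + 1 < n) {a : ℕ} (ha : a < n) : sw j a < n := by
  rw [sw_apply]
  split_ifs <;> omega

lemma sw_ordkeep {j a b : ℕ} (hab : a < b) (hne : ¬(a = j ∧ b = j + 1)) :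
    sw j a < sw j b := by
  simp only [sw_apply]
  split_ifs <;> omega

lemma sw_sw (j x : ℕ) : sw j (sw j x) = x := by
  rw [sw_apply, sw_apply]
  split_ifs <;> omega

lemma sw_at_self (j : ℕ) : sw j j = j + 1 := Equiv.swap_apply_left _ _

lemma sw_at_succ (j : ℕ) : sw j (j+1) = j := Equiv.swap_apply_right _ _

lemma invn_step (n j : ℕ) (hj : j + 1 < n) (w : Equiv.Perm ℕ) (hw : w j < w (j+1)) :
    invn n (w * sw j) = invn n w + 1 := by
  classical
  have hset :
      ((Finset.range n ×ˢ Finset.range n).filter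
          fun p => p.1 < p.2 ∧ (w * sw j) p.2 < (w * sw j) p.1) =
        insert ((j, j+1) : ℕ × ℕ)
          (((Finset.range n ×ˢ Finset.range n).filter
            fun p => p.1 < p.2 ∧ w p.2 < w p.1).image fun p => (sw j p.1, sw j p.2)) := by
    rw [Finset.ext_iff]; rintro ⟨a, b⟩
    rw [Finset.mem_filter]
    simp only [Finset.mem_insert, Finset.mem_image, Finset.mem_filter, Finset.mem_product,
      Finset.mem_range, Prod.mk.injEq, Equiv.Perm.mul_apply]
    constructor
    · rintro ⟨⟨ha, hb⟩, hab, hlt⟩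
      by_cases hjj : a = j ∧ b = j + 1
      · exact Or.inl ⟨hjj.1, hjj.2⟩
      · refine Or.inr ⟨(sw j a, sw j b), ⟨⟨sw_in_range hj ha, sw_in_range hj hb⟩,
          sw_ordkeep hab hjj, ?_⟩, sw_sw j a, sw_sw j b⟩
        exact hlt
    · rintro (⟨h1, h2⟩ | ⟨⟨c, d⟩, ⟨⟨hc, hd⟩, hcd, hinv⟩, hc', hd'⟩)
      · refine ⟨⟨by omega, by omega⟩, by omega, ?_⟩
        rw [h1, h2, sw_at_self, sw_at_succ]
        exact hw
      · have hinv' : w d < w c := hinv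
        have hcd' : c < d := hcd
        have hne : ¬(c = j ∧ d = j + 1) := by
          rintro ⟨rfl, rfl⟩
          omega
        refine ⟨⟨?_, ?_⟩, ?_, ?_⟩
        · rw [← hc']; exact sw_in_range hj hc
        · rw [← hd']; exact sw_in_range hj hd
        · rw [← hc', ← hd']; exact sw_ordkeep hcd hne
        · rw [← hc', ← hd', sw_sw, sw_sw]; exact hinv
  rw [invn, hset, Finset.card_insert_of_notMem, Finset.card_image_of_injective, invn,
    Nat.add_comm]
  · intro p q hpq
    have hpq' : (sw j p.1, sw j p.2) = (sw j q.1, sw j q.2) := hpq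
    have e1 : sw j p.1 = sw j q.1 := congrArg Prod.fst hpq'
    have e2 : sw j p.2 = sw j q.2 := congrArg Prod.snd hpq'
    have h1 : sw j (sw j p.1) = sw j (sw j q.1) := congrArg (sw j) e1
    have h2 : sw j (sw j p.2) = sw j (sw j q.2) := congrArg (sw j) e2
    rw [sw_sw, sw_sw] at h1 h2
    exact Prod.ext h1 h2
  · intro hmem
    rw [Finset.mem_image] at hmem
    obtain ⟨⟨c, d⟩, hcd, heq⟩ := hmem
    rw [Finset.mem_filter] at hcd
    have heq' : (sw j c, sw j d) = (j, j + 1) := heq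
    have h1 : sw j c = j := congrArg Prod.fst heq'
    have h2 : sw j d = j + 1 := congrArg Prod.snd heq' 
    have hc : c = j + 1 := by
      have h3 := congrArg (sw j) h1
      rw [sw_sw, sw_at_self] at h3
      exact h3
    have hd : d = j := by
      have h3 := congrArg (sw j) h2
      rw [sw_sw, sw_at_succ] at h3
      exact h3
    have h4 : c < d := hcd.2.1
    omega
def psiF (n k j : ℕ) : ℕ → ℕ := fun x =>
  if x < k then n-1-x else if x < j then x-k else if x = j then n-1-k
  else if x < n then x-1-k else x

lemma InvStep (n j : ℕ) (hj : j + 1 < n) (p : PolyRing) (E : M) (π : Equiv.Perm ℕ)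
    (t : ℕ) (c : PolyRing) (hasc : π j < π (j+1))
    (hsupp : ∀ w, E w ≠ 0 → invn n w ≤ t) (hπ : invn n π = t) (hc : E π = c) :
    (∀ w, (Ao j p E) w ≠ 0 → invn n w ≤ t+1) ∧ invn n (π * sw j) = t + 1 ∧
      (Ao j p E) (π * sw j) = p * c := by
  have hstep := invn_step n j hj π hasc
  refine ⟨?_, by omega, ?_⟩
  · intro w hw
    rw [Ao_apply, Finsupp.add_apply, Finsupp.smul_apply, smul_eq_mul] at hw
    by_cases hE : E w = 0
    · have hT : (T j E) w ≠ 0 := by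
        intro h0
        rw [hE, h0, mul_zero, add_zero] at hw
        exact hw rfl
      rw [Tapp] at hT
      by_cases hdesc : w (j+1) < w j
      · rw [if_pos hdesc] at hT
        have h1 : invn n (w * sw j) ≤ t := hsupp _ hT
        have h2 : (w * sw j) j < (w * sw j) (j+1) := by
          rw [mulsw_self, mulsw_succ]
          exact hdesc
        have h3 := invn_step n j hj (w * sw j) h2
        have h4 : w * sw j * sw j = w := by
          rw [mul_assoc, sw_mul_self, mul_one]
        rw [h4] at h3
        omega
      · rw [if_neg hdesc] at hT
        exact absurd rfl hT
    · exact le_trans (hsupp w hE) (by omega)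
  · rw [Ao_apply, Finsupp.add_apply, Finsupp.smul_apply, smul_eq_mul]
    have hE0 : E (π * sw j) = 0 := by
      by_contra h0
      have := hsupp _ h0
      omega
    have hdesc : (π * sw j) (j+1) < (π * sw j) j := by
      rw [mulsw_self, mulsw_succ]
      exact hasc
    rw [hE0, zero_add, Tapp, if_pos hdesc, mul_assoc, sw_mul_self, mul_one, hc]

lemma inner (n k : ℕ) (hk : k + 1 < n) : ∀ d j, j + d = n - 1 → k ≤ j →
    ∀ (E : M) (π : Equiv.Perm ℕ) (t : ℕ) (c : PolyRing),
    (∀ x, π x = psiF n k (n-1) x) → (∀ w, E w ≠ 0 → invn n w ≤ t) → invn n π = t →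
    E π = c →
    ∃ π' : Equiv.Perm ℕ, (∀ x, π' x = psiF n k j x) ∧
      (∀ w, (rowP n j (X k) E) w ≠ 0 → invn n w ≤ t + (n-1-j)) ∧
      invn n π' = t + (n-1-j) ∧ (rowP n j (X k) E) π' = X k ^ (n-1-j) * c := by
  intro d
  induction d with
  | zero =>
      intro j hd _ E π t c hπf hsupp hπ hc
      have hj : j = n - 1 := by omega
      subst hj
      rw [rowP_triv le_rfl]
      refine ⟨π, hπf, ?_, ?_, ?_⟩
      · intro w hw
        rw [Module.End.one_apply] at hw
        exact le_trans (hsupp w hw) (by omega)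
      · omega
      · rw [Module.End.one_apply, hc, Nat.sub_self, pow_zero, one_mul]
  | succ d ih =>
      intro j hd hkj E π t c hπf hsupp hπ hc
      have hj : j < n - 1 := by omega
      obtain ⟨π₁, hπ₁f, hsupp₁, hπ₁, hc₁⟩ :=
        ih (j+1) (by omega) (by omega) E π t c hπf hsupp hπ hc
      have hasc : π₁ j < π₁ (j+1) := by
        rw [hπ₁f j, hπ₁f (j+1)]
        simp only [psiF]
        split_ifs <;> omega
      obtain ⟨hs', hi', hv'⟩ := InvStep n j (by omega) (X k) _ π₁ _ _ hasc hsupp₁ hπ₁ hc₁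
      refine ⟨π₁ * sw j, ?_, ?_, ?_, ?_⟩
      · intro x
        rw [Equiv.Perm.mul_apply, hπ₁f (sw j x)]
        simp only [sw_apply, psiF]
        split_ifs <;> omega
      · intro w hw
        rw [rowP_cons hj] at hw
        rw [Module.End.mul_apply] at hw
        have := hs' w hw
        omega
      · rw [hi']
        omega
      · rw [rowP_cons hj, Module.End.mul_apply, hv']
        have harith : X k * (X k ^ (n-1-(j+1)) * c) = X k ^ (n-1-j) * c := by
          rw [show n-1-j = (n-1-(j+1))+1 from by omega]
          ring
        rw [harith]

lemma outer (n : ℕ) : ∀ k, k ≤ n - 1 →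
    ∃ π : Equiv.Perm ℕ, (∀ x, π x = psiF n k (n-1) x) ∧
      (∀ w, (Aw (Gw n k) (Finsupp.single 1 1)) w ≠ 0 →
        invn n w ≤ ∑ r ∈ Finset.range k, (n-1-r)) ∧
      invn n π = ∑ r ∈ Finset.range k, (n-1-r) ∧
      (Aw (Gw n k) (Finsupp.single 1 1)) π = ∏ r ∈ Finset.range k, X r ^ (n-1-r) := by
  intro k
  induction k with
  | zero =>
      intro _
      refine ⟨1, ?_, ?_, ?_, ?_⟩
      · intro x
        simp only [psiF, Equiv.Perm.one_apply]
        split_ifs <;> omega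
      · intro w hw
        rw [Gw, Aw_nil, Module.End.one_apply, Finsupp.single_apply] at hw
        split_ifs at hw with h
        · subst h
          rw [invn_one]
          simp
        · exact absurd rfl hw
      · rw [invn_one]
        simp
      · rw [Gw, Aw_nil, Module.End.one_apply, Finsupp.single_eq_same]
        simp
  | succ k ih =>
      intro hk
      obtain ⟨π, hπf, hsupp, hπ, hc⟩ := ih (by omega)
      obtain ⟨π', hπ'f, hsupp', hπ', hc'⟩ :=
        inner n k (by omega) (n-1-k) k (by omega) le_rfl _ π _ _ hπf hsupp hπ hc
      have hGw : Aw (Gw n (k+1)) (Finsupp.single 1 1) =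
          rowP n k (X k) (Aw (Gw n k) (Finsupp.single 1 1)) := by
        rw [Gw, Aw_append, Module.End.mul_apply, rowP]
      refine ⟨π', ?_, ?_, ?_, ?_⟩
      · intro x
        rw [hπ'f x]
        simp only [psiF]
        split_ifs <;> omega
      · intro w hw
        rw [hGw] at hw
        have := hsupp' w hw
        rw [Finset.sum_range_succ]
        omega
      · rw [hπ', Finset.sum_range_succ]
      · rw [hGw, hc', Finset.prod_range_succ, mul_comm]

lemma Felt_wZero (n : ℕ) : Felt n (wZero n) = staircase n := by
  obtain ⟨π, hπf, _, _, hc⟩ := outer n (n-1) le_rfl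
  have hπw : π = wZero n := by
    apply Equiv.ext
    intro x
    rw [hπf x]
    show _ = if x < n then n - 1 - x else x
    simp only [psiF]
    split_ifs <;> omega
  rw [Felt, ← hπw, hc, staircase]
  by_cases hn : n = 0
  · subst hn
    rfl
  · rw [show n = (n-1)+1 from by omega, Finset.prod_range_succ]
    rw [show (n-1)+1-1-(n-1) = 0 from by omega, pow_zero, mul_one]
    congr 1 <;> try (apply Finset.prod_congr rfl; intro r hr; rw [Finset.mem_range] at hr)
    all_goals rw [show (n-1)+1-1 = n-1 from by omega]

lemma staircase_InC (n : ℕ) : InC n (staircase n) :=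
  Or.inr ⟨wZero n, (Felt_wZero n).symm⟩

/-- Every Schubert polynomial `𝔖_w` is a sum of monomials with nonnegative
integer coefficients; that is, every coefficient of `𝔖_w` is `≥ 0`. -/
theorem schubert_coeff_nonneg (w : Equiv.Perm ℕ) (hw : {i : ℕ | w i ≠ i}.Finite)
    (m : ℕ →₀ ℕ) : 0 ≤ coeff m (schubert w) := by
  rw [schubert]
  split_ifs with h
  · rw [schubertIn]
    split_ifs with h2
    · exact Pos_InC _ (InC_divDiffWord _ _ (staircase_InC _)) m
    · simp
  · simp
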